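/- arXiv:2201.06269 — 3 statements merged into one kernel-verified Lean document; each statement's English description precedes it below -/
import Mathlib

section
/- Let n ≥ 2 and r ≥ 1 be integers. The r×r determinant of the matrix Q_r whose (i,j) entry is 1 if i ≤ j ≤ i + n - 1 (interpreting indices within 1,...,r), -1 if j = i - 1, and 0 otherwise, equals the n-step Fibonacci number F^{(n)}_r. (Equivalently, det Q_1 = 1, det Q_k = 2^{k-1} for k ≤ n, and det Q_r satisfies the n-step recurrence for r > n.) -/
open Finset

def Qmat (n r : ℕ) : Matrix (Fin r) (Fin r) ℤ :=
  Matrix.of fun i j : Fin r =>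
    if (i : ℕ) ≤ (j : ℕ) ∧ (j : ℕ) + 1 ≤ (i : ℕ) + n then (1 : ℤ)
    else if (j : ℕ) + 1 = (i : ℕ) then -1 else 0

def Cmat (n s k : ℕ) : Matrix (Fin s) (Fin s) ℤ :=
  Matrix.of fun i j : Fin s =>
    if (j : ℕ) + 1 < s then
      (if (i : ℕ) ≤ (j : ℕ) ∧ (j : ℕ) + 1 ≤ (i : ℕ) + n then (1 : ℤ)
       else if (j : ℕ) + 1 = (i : ℕ) then -1 else 0)
    else if s + k ≤ (i : ℕ) + n then 1 else 0

lemma sub_last (n m k : ℕ) :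
    (Cmat n (m+2) k).submatrix Fin.castSucc Fin.castSucc = Qmat n (m+1) := by
  ext i j
  have hj := j.isLt
  simp only [Matrix.submatrix_apply, Cmat, Qmat, Matrix.of_apply,
    Fin.coe_castSucc]
  split_ifs <;> omega

lemma coe_succAbove_pen (m : ℕ) (j : Fin (m+1)) :
    (((Fin.castSucc (Fin.last m)).succAbove j : Fin (m+2)) : ℕ)
      = if (j : ℕ) < m then (j : ℕ) else (j : ℕ) + 1 := by
  by_cases hc : (j : ℕ) < m
  · rw [Fin.succAbove_of_castSucc_lt _ _ (by simp [Fin.lt_def, hc]), Fin.coe_castSucc,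
      if_pos hc]
  · rw [Fin.succAbove_of_le_castSucc _ _ (by simp [Fin.le_def]; omega), Fin.val_succ,
      if_neg hc]

lemma sub_pen (n m k : ℕ) :
    (Cmat n (m+2) k).submatrix Fin.castSucc (Fin.castSucc (Fin.last m)).succAbove
      = Cmat n (m+1) (k+1) := by
  ext i j
  have hi := i.isLt
  have hj := j.isLt
  simp only [Matrix.submatrix_apply, Cmat, Matrix.of_apply, Fin.coe_castSucc,
    coe_succAbove_pen]
  split_ifs <;> omega

lemma det_Cmat_succ (n m k : ℕ) :
    (Cmat n (m+2) k).det
      = (if k + 1 ≤ n then 1 else 0) * (Qmat n (m+1)).det + (Cmat n (m+1) (k+1)).det := by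
  rw [Matrix.det_succ_row (Cmat n (m+2) k) (Fin.last (m+1))]
  rw [Fin.sum_univ_castSucc, Fin.sum_univ_castSucc]
  have h0 : ∀ jj : Fin m,
      (-1:ℤ) ^ ((Fin.last (m+1) : ℕ) + ((jj.castSucc.castSucc : Fin (m+2)) : ℕ))
        * Cmat n (m+2) k (Fin.last (m+1)) jj.castSucc.castSucc
        * ((Cmat n (m+2) k).submatrix (Fin.last (m+1)).succAbove
            (jj.castSucc.castSucc).succAbove).det = 0 := by
    intro jj
    have hjj := jj.isLt
    have : Cmat n (m+2) k (Fin.last (m+1)) jj.castSucc.castSucc = 0 := by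
      simp only [Cmat, Matrix.of_apply, Fin.coe_castSucc, Fin.val_last]
      split_ifs <;> omega
    rw [this]; ring
  rw [Finset.sum_eq_zero (fun jj _ => h0 jj), zero_add]
  have e1 : Cmat n (m+2) k (Fin.last (m+1)) ((Fin.last m).castSucc) = -1 := by
    simp only [Cmat, Matrix.of_apply, Fin.coe_castSucc, Fin.val_last]
    split_ifs <;> omega
  have e2 : Cmat n (m+2) k (Fin.last (m+1)) (Fin.last (m+1))
      = (if k + 1 ≤ n then 1 else 0) := by
    simp only [Cmat, Matrix.of_apply, Fin.val_last]
    split_ifs <;> omega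
  rw [e1, e2, Fin.succAbove_last, sub_last, sub_pen]
  simp only [Fin.val_last, Fin.coe_castSucc]
  have h1 : (-1:ℤ) ^ (m + 1 + m) = -1 := by
    rw [show m+1+m = 2*m+1 by ring, pow_succ, pow_mul]; norm_num
  have h2 : (-1:ℤ) ^ (m + 1 + (m+1)) = 1 := by
    rw [show m+1+(m+1) = 2*(m+1) by ring, pow_mul]; norm_num
  rw [h1, h2]; ring

def dd (n : ℕ) : ℕ → ℤ
  | 0 => 1
  | (r+1) => ∑ i ∈ Finset.range (r+1), if i + 1 ≤ n then dd n (r - i) else 0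
  decreasing_by omega

lemma det_Cmat_one (n k : ℕ) : (Cmat n 1 k).det = if k + 1 ≤ n then 1 else 0 := by
  rw [Matrix.det_fin_one]
  simp only [Cmat, Matrix.of_apply, Fin.val_zero]
  split_ifs <;> omega

lemma det_Cmat_unroll (n : ℕ) : ∀ s k, (Cmat n (s+1) k).det
    = ∑ i ∈ Finset.range (s+1), if k + i + 1 ≤ n then (Qmat n (s - i)).det else 0 := by
  intro s
  induction s with
  | zero =>
    intro k
    rw [det_Cmat_one]
    simp [Matrix.det_isEmpty]
  | succ s ih =>
    intro k
    rw [det_Cmat_succ, ih,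
      Finset.sum_range_succ' (fun i => if k + i + 1 ≤ n then (Qmat n (s + 1 - i)).det else 0)
        (s+1)]
    simp only [Nat.add_sub_add_right, Nat.add_zero, Nat.sub_zero]
    have h2 : (if k + 0 + 1 ≤ n then (Qmat n (s + 1)).det else 0)
        = (if k + 1 ≤ n then 1 else 0) * (Qmat n (s+1)).det := by
      simp only [Nat.add_zero]
      split_ifs <;> simp
    rw [h2]
    have h3 : (∑ i ∈ Finset.range (s+1),
          if k + (i+1) + 1 ≤ n then (Qmat n (s + 1 - (i+1))).det else 0)
        = ∑ i ∈ Finset.range (s+1), if k + 1 + i + 1 ≤ n then (Qmat n (s - i)).det else 0 :=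
      Finset.sum_congr rfl fun i _ => by
        rw [show k + (i+1) + 1 = k + 1 + i + 1 by ring, show s + 1 - (i+1) = s - i by omega]
    rw [h3]
    ring

lemma Cmat_zero (n s : ℕ) : Cmat n s 0 = Qmat n s := by
  ext i j
  have hi := i.isLt
  have hj := j.isLt
  simp only [Cmat, Qmat, Matrix.of_apply]
  split_ifs <;> omega

lemma det_Qmat_sum (n s : ℕ) : (Qmat n (s+1)).det
    = ∑ i ∈ Finset.range (s+1), if i + 1 ≤ n then (Qmat n (s - i)).det else 0 := by
  rw [← Cmat_zero, det_Cmat_unroll]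
  exact Finset.sum_congr rfl fun i _ => by rw [Nat.zero_add]

lemma det_Qmat_eq_dd (n : ℕ) : ∀ r, (Qmat n r).det = dd n r := by
  intro r
  induction r using Nat.strong_induction_on with
  | _ r ih =>
    match r with
    | 0 => simp [dd, Matrix.det_isEmpty]
    | (s+1) =>
      rw [det_Qmat_sum, dd]
      exact Finset.sum_congr rfl fun i _ => by rw [ih (s - i) (by omega)]

lemma dd_one (n : ℕ) (hn : 1 ≤ n) : dd n 1 = 1 := by
  rw [dd, Finset.sum_range_one, if_pos (by omega : 0 + 1 ≤ n)]
  rw [show (0 : ℕ) - 0 = 0 from rfl, dd]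

lemma dd_pow (n : ℕ) (hn : 1 ≤ n) : ∀ r, 1 ≤ r → r ≤ n → dd n r = 2 ^ (r - 1) := by
  intro r
  induction r with
  | zero => omega
  | succ s ih =>
    intro _ hsn
    rcases Nat.eq_zero_or_pos s with hs | hs
    · subst hs; simpa using dd_one n hn
    · -- dd (s+1) = 2 * dd s
      have key : dd n (s+1) = dd n s + dd n s := by
        rw [dd, Finset.sum_range_succ']
        simp only [Nat.add_zero, Nat.sub_zero]
        rw [if_pos (by omega : 0 + 1 ≤ n)]
        obtain ⟨t, rfl⟩ : ∃ t, s = t + 1 := ⟨s - 1, by omega⟩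
        have h1 : (∑ i ∈ Finset.range (t+1), if i + 1 + 1 ≤ n then dd n (t + 1 - (i+1)) else 0)
            = ∑ i ∈ Finset.range (t+1), if i + 1 ≤ n then dd n (t - i) else 0 :=
          Finset.sum_congr rfl fun i hi => by
            rw [Finset.mem_range] at hi
            rw [if_pos (by omega), if_pos (by omega), show t + 1 - (i+1) = t - i by omega]
        rw [h1, ← dd]
      rw [key, ih (by omega) (by omega)]
      rw [show s + 1 - 1 = (s - 1) + 1 by omega, pow_succ]
      ring

lemma dd_rec (n r : ℕ) (h : n < r) : dd n r = ∑ i ∈ Finset.range n, dd n (r - 1 - i) := by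
  obtain ⟨s, rfl⟩ : ∃ s, r = s + 1 := ⟨r - 1, by omega⟩
  rw [dd]
  rw [← Finset.sum_subset (Finset.range_subset_range.2 (by omega : n ≤ s + 1))
    (fun x _ hx => by rw [if_neg (by rw [Finset.mem_range] at hx; omega)])]
  exact Finset.sum_congr rfl fun i hi => by
    rw [Finset.mem_range] at hi
    rw [if_pos (by omega), show s + 1 - 1 - i = s - i by omega]

/-- The determinant of `Q_r` equals the `n`-step Fibonacci number `F^{(n)}_r`. -/
theorem det_Q_eq_nstep (n : ℕ) (hn : 2 ≤ n) (F : ℕ → ℤ)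
    (hinit : ∀ k : ℕ, 1 ≤ k → k ≤ n → F k = 2 ^ (k - 1))
    (hrec : ∀ r : ℕ, n < r → F r = ∑ i ∈ Finset.range n, F (r - 1 - i))
    (r : ℕ) (hr : 1 ≤ r) :
    Matrix.det (Matrix.of fun i j : Fin r =>
      if (i : ℕ) ≤ (j : ℕ) ∧ (j : ℕ) + 1 ≤ (i : ℕ) + n then (1 : ℤ)
      else if (j : ℕ) + 1 = (i : ℕ) then -1 else 0)
      = F r := by
  have main : ∀ r, 1 ≤ r → dd n r = F r := by
    intro r
    induction r using Nat.strong_induction_on with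
    | _ r ih =>
      intro hr1
      by_cases hle : r ≤ n
      · rw [hinit r hr1 hle, dd_pow n (by omega) r hr1 hle]
      · rw [hrec r (by omega), dd_rec n r (by omega)]
        exact Finset.sum_congr rfl fun i hi => by
          rw [Finset.mem_range] at hi
          exact ih (r - 1 - i) (by omega) (by omega)
  show (Qmat n r).det = F r
  rw [det_Qmat_eq_dd, main r hr]
end

section
/- Let n ≥ 2 and let A, B be invertible n×n matrices over a field. Extend the columns of each by the rule that each new column is the sum of the n immediately preceding columns, producing columns up to index n+r. Let M be the determinant of the matrix formed from columns 1,...,n-1 and n+r of the extension of A, and N the analogous determinant for B. Then M / det A = N / det B. -/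
/-- Universal coefficients of the column recurrence. -/
noncomputable def detRatioCoef (n : ℕ) (K : Type*) [Semiring K] : ℕ → Fin n → K
  | m =>
    if h : m < n then Pi.single ⟨m, h⟩ 1
    else ∑ i ∈ (Finset.range n).attach, detRatioCoef n K (m - 1 - i.1)
decreasing_by
  have hi : i.1 < n := Finset.mem_range.mp i.2
  omega

lemma detRatioCoef_spec (n r : ℕ) (K : Type*) [Field K]
    (A : Matrix (Fin n) (Fin n) K) (CA : ℕ → Fin n → K)
    (hinit : ∀ j : Fin n, CA (j : ℕ) = fun i => A i j)
    (hrec : ∀ m : ℕ, n ≤ m → m < n + r → CA m = ∑ i ∈ Finset.range n, CA (m - 1 - i)) :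
    ∀ m, m < n + r → ∀ i, CA m i = ∑ k, detRatioCoef n K m k * A i k := by
  intro m
  induction m using Nat.strong_induction_on with
  | _ m ih =>
    intro hm i
    by_cases h : m < n
    · have h1 : CA m = fun i => A i ⟨m, h⟩ := hinit ⟨m, h⟩
      rw [h1, detRatioCoef]
      simp [h, Pi.single_apply]
    · push_neg at h
      rw [hrec m h hm]
      rw [detRatioCoef]
      rw [dif_neg (by omega)]
      simp only [Finset.sum_apply, Finset.sum_mul]
      rw [Finset.sum_comm]
      rw [← Finset.sum_attach (Finset.range n) (fun i0 => CA (m - 1 - i0) i)]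
      refine Finset.sum_congr rfl fun x _ => ?_
      have hx : x.1 < n := Finset.mem_range.mp x.2
      exact ih (m - 1 - x.1) (by omega) (by omega) i

/-- The ratio `det(X_1,…,X_{n-1},X_{n+r}) / det X` is the same for any two
invertible matrices extended by the same column rule. -/
theorem det_ratio_indep (n : ℕ) (hn : 2 ≤ n) (K : Type*) [Field K]
    (A B : Matrix (Fin n) (Fin n) K) (hA : A.det ≠ 0) (hB : B.det ≠ 0)
    (r : ℕ)
    (CA CB : ℕ → Fin n → K)
    (hCAinit : ∀ j : Fin n, CA (j : ℕ) = fun i => A i j)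
    (hCArec : ∀ m : ℕ, n ≤ m → m < n + r → CA m = ∑ i ∈ Finset.range n, CA (m - 1 - i))
    (hCBinit : ∀ j : Fin n, CB (j : ℕ) = fun i => B i j)
    (hCBrec : ∀ m : ℕ, n ≤ m → m < n + r → CB m = ∑ i ∈ Finset.range n, CB (m - 1 - i)) :
    Matrix.det (Matrix.of fun i j : Fin n =>
        if (j : ℕ) < n - 1 then A i j else CA (n + r - 1) i) / A.det
      = Matrix.det (Matrix.of fun i j : Fin n =>
        if (j : ℕ) < n - 1 then B i j else CB (n + r - 1) i) / B.det := by
  set c : Fin n → K := detRatioCoef n K (n + r - 1) with hc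
  set E : Matrix (Fin n) (Fin n) K := Matrix.of fun k j : Fin n =>
    if (j : ℕ) < n - 1 then (if k = j then (1 : K) else 0) else c k with hE
  have key : ∀ (X : Matrix (Fin n) (Fin n) K) (CX : ℕ → Fin n → K),
      (∀ j : Fin n, CX (j : ℕ) = fun i => X i j) →
      (∀ m : ℕ, n ≤ m → m < n + r → CX m = ∑ i ∈ Finset.range n, CX (m - 1 - i)) →
      (Matrix.of fun i j : Fin n =>
        if (j : ℕ) < n - 1 then X i j else CX (n + r - 1) i) = X * E := by
    intro X CX hinit hrec
    ext i j
    by_cases h : (j : ℕ) < n - 1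
    · simp [Matrix.mul_apply, hE, h, mul_ite]
    · simp only [Matrix.of_apply, Matrix.mul_apply, hE, if_neg h]
      rw [detRatioCoef_spec n r K X CX hinit hrec (n + r - 1) (by omega) i]
      exact Finset.sum_congr rfl fun k _ => mul_comm _ _
  rw [key A CA hCAinit hCArec, key B CB hCBinit hCBrec, Matrix.det_mul, Matrix.det_mul,
    mul_comm A.det, mul_comm B.det, mul_div_assoc, mul_div_assoc, div_self hA, div_self hB]
end

section
/- For every integer n ≥ 2 and every integer r ≥ 2, the n-step Fibonacci Cassini determinant (the n×n matrix with (i,j) entry F^{(n)}_{r+j-i+1}) is a unit in the integers, i.e. its absolute value is 1; in particular consecutive n-tuples of shifted n-step Fibonacci sequences are linearly independent over the rationals. -/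
/-- The `n`-step Fibonacci Cassini determinant has absolute value `1`; in
particular the consecutive shifted `n`-tuples are linearly independent over `ℚ`. -/
theorem cassini_nstep_isUnit (n : ℕ) (hn : 2 ≤ n) (F : ℤ → ℤ)
    (hrec : ∀ r : ℤ, F r = ∑ i ∈ Finset.range n, F (r - 1 - (i : ℤ)))
    (hinit : ∀ k : ℕ, 1 ≤ k → k ≤ n → F k = 2 ^ (k - 1))
    (r : ℤ) (hr : 2 ≤ r) :
    |Matrix.det (Matrix.of fun i j : Fin n => F (r + (j : ℤ) - (i : ℤ) + 1))| = 1 ∧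
    LinearIndependent ℚ (fun i : Fin n => fun j : Fin n =>
      ((F (r + (j : ℤ) - (i : ℤ) + 1) : ℚ))) := by
  haveI : NeZero n := ⟨by omega⟩
  -- geometric sum
  have hgeom : ∀ m : ℕ, ∑ i ∈ Finset.range m, (2:ℤ)^i = 2^m - 1 := by
    intro m
    induction m with
    | zero => simp
    | succ m ih => rw [Finset.sum_range_succ, ih]; ring
  -- step lemma
  have hstep : ∀ s : ℤ, F (s - n) = 2 * F s - F (s + 1) := by
    intro s
    have h1 : F (s + 1) = ∑ i ∈ Finset.range n, F (s - (i:ℤ)) := by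
      rw [hrec (s+1)]
      refine Finset.sum_congr rfl fun i _ => by ring_nf
    have h2 : F s = ∑ i ∈ Finset.range n, F (s - ((i:ℤ)+1)) := by
      rw [hrec s]
      refine Finset.sum_congr rfl fun i _ => by ring_nf
    have htel : ∑ i ∈ Finset.range n, (F (s - (i:ℤ)) - F (s - ((i:ℤ)+1)))
        = F (s - (0:ℕ)) - F (s - (n:ℕ)) := by
      have := Finset.sum_range_sub' (fun i : ℕ => F (s - (i:ℤ))) n
      simpa [add_comm] using this
    rw [Finset.sum_sub_distrib, ← h1, ← h2] at htel
    simp at htel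
    linarith
  have hFn1 : F ((n:ℤ) + 1) = 2 ^ n - 1 := by
    rw [hrec ((n:ℤ)+1)]
    have : ∀ i ∈ Finset.range n, F ((n:ℤ) + 1 - 1 - (i:ℤ)) = 2 ^ (n - 1 - i) := by
      intro i hi
      rw [Finset.mem_range] at hi
      have h1 : (n:ℤ) + 1 - 1 - (i:ℤ) = ((n - i : ℕ) : ℤ) := by
        push_cast [Nat.cast_sub hi.le]; ring
      rw [h1, hinit (n - i) (by omega) (by omega)]
      congr 1
      omega
    rw [Finset.sum_congr rfl this]
    have := Finset.sum_range_reflect (fun i : ℕ => (2:ℤ)^i) n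
    rw [← hgeom n, ← this]
  have hF0 : F 0 = 1 := by
    have := hstep (n:ℤ)
    rw [hinit n (by omega) le_rfl, hFn1] at this
    have h2 : (2:ℤ) * 2 ^ (n-1) = 2 ^ n := by
      rw [← pow_succ']
      congr 1
      omega
    simp at this
    rw [this, h2]
    ring
  have hFneg : ∀ k : ℤ, -(n:ℤ) + 1 ≤ k → k ≤ -1 → F k = 0 := by
    intro k hk1 hk2
    have hm : ∃ m : ℕ, 1 ≤ m ∧ m ≤ n - 1 ∧ k = (m:ℤ) - n := ⟨(k + n).toNat, by omega, by omega, by omega⟩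
    obtain ⟨m, hm1, hm2, rfl⟩ := hm
    have := hstep (m:ℤ)
    rw [hinit m hm1 (by omega)] at this
    have h1 : (m:ℤ) + 1 = ((m+1:ℕ):ℤ) := by push_cast; ring
    rw [h1, hinit (m+1) (by omega) (by omega)] at this
    rw [this]
    have : (2:ℤ) * 2 ^ (m-1) = 2 ^ (m + 1 - 1) := by
      rw [← pow_succ']
      congr 1
      omega
    rw [this]
    ring
  -- the matrix family
  set M : ℤ → Matrix (Fin n) (Fin n) ℤ :=
    fun s => Matrix.of fun i j : Fin n => F (s + (j : ℤ) - (i : ℤ) + 1) with hM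
  -- the companion-like matrix
  set τ : Equiv.Perm (Fin n) := Equiv.addRight (-1 : Fin n) with hτ
  set U : Matrix (Fin n) (Fin n) ℤ :=
    Matrix.of (fun k j : Fin n => if (j:ℕ) = n - 1 then 1 else if k = j then 1 else 0) with hU
  set C : Matrix (Fin n) (Fin n) ℤ := (τ.permMatrix ℤ) * U with hC
  have hCentry : ∀ k j : Fin n, C k j = U (τ k) j := by
    intro k j
    rw [hC, PEquiv.toMatrix_toPEquiv_mul]
    rfl
  have hUdet : U.det = 1 := by
    rw [Matrix.det_of_upperTriangular]
    · refine Finset.prod_eq_one fun i _ => ?_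
      simp only [hU, Matrix.of_apply]
      split <;> simp
    · intro i j hij
      simp only [hU, Matrix.of_apply, id] at hij ⊢
      have h1 : (j:ℕ) ≠ n - 1 := by
        intro h
        have := i.isLt
        omega
      rw [if_neg h1, if_neg (by intro h; subst h; exact absurd hij (lt_irrefl _))]
  have hCdet : |C.det| = 1 := by
    rw [hC, Matrix.det_mul, Matrix.det_permutation, hUdet, mul_one]
    rcases Int.units_eq_one_or (Equiv.Perm.sign τ) with h | h <;> rw [h] <;> rfl
  -- key recurrence for M
  have hMmul : ∀ s : ℤ, M s = M (s - 1) * C := by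
    intro s
    ext i j
    rw [Matrix.mul_apply]
    simp_rw [hCentry]
    by_cases hj : (j:ℕ) = n - 1
    · have hUj : ∀ k : Fin n, U (τ k) j = 1 := by
        intro k
        simp [hU, hj]
      simp_rw [hUj, mul_one]
      have hMij : M s i j = F (s - (i:ℤ) + n) := by
        simp only [hM, Matrix.of_apply]
        congr 1
        have : (j:ℕ) = n - 1 := hj
        omega
      rw [hMij, hrec (s - (i:ℤ) + n)]
      have hR : ∑ x : Fin n, M (s-1) i x = ∑ k ∈ Finset.range n, F (s - (i:ℤ) + k) := by
        have h1 : ∑ x : Fin n, M (s-1) i x = ∑ x : Fin n, F (s - (i:ℤ) + (x:ℕ)) :=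
          Finset.sum_congr rfl fun x _ => by simp only [hM, Matrix.of_apply]; ring_nf
        rw [h1]
        exact Fin.sum_univ_eq_sum_range (fun k : ℕ => F (s - (i:ℤ) + (k:ℤ))) n
      rw [hR]
      have hrefl := Finset.sum_range_reflect (fun k : ℕ => F (s - (i:ℤ) + k)) n
      rw [← hrefl]
      refine Finset.sum_congr rfl fun k hk => ?_
      rw [Finset.mem_range] at hk
      congr 1
      omega
    · -- j < n - 1 : U column is e_j
      have hsum : ∑ k : Fin n, M (s-1) i k * U (τ k) j
          = M (s-1) i (τ.symm j) := by
        rw [Fintype.sum_eq_single (τ.symm j)]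
        · simp [hU, hj, Equiv.apply_symm_apply]
        · intro k hk
          have : τ k ≠ j := fun h => hk (by rw [← h]; simp)
          simp [hU, hj, this]
      rw [hsum]
      simp only [hM, Matrix.of_apply]
      congr 1
      have hτs : ((τ.symm j : Fin n) : ℤ) = (j:ℤ) + 1 := by
        have h1 : τ.symm j = j + 1 := by
          rw [hτ, Equiv.addRight_symm, Equiv.coe_addRight, neg_neg]
        have h2 : ((j + 1 : Fin n) : ℕ) = (j:ℕ) + 1 := by
          have h3 : ((1:Fin n):ℕ) = 1 := by
            rw [Fin.val_one']
            exact Nat.mod_eq_of_lt (by omega)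
          have h4 := j.isLt
          rw [Fin.add_def, Fin.val_mk, h3]
          exact Nat.mod_eq_of_lt (by omega)
        rw [h1]
        push_cast [h2]
        ring
      rw [hτs]
      ring
  -- abs of determinant is invariant under shift
  have habs : ∀ s : ℤ, |(M s).det| = |(M (s-1)).det| := by
    intro s
    rw [hMmul s, Matrix.det_mul, abs_mul, hCdet, mul_one]
  -- base case at s = -1 : upper triangular with unit diagonal
  have hbase : (M (-1)).det = 1 := by
    rw [Matrix.det_of_upperTriangular]
    · refine Finset.prod_eq_one fun i _ => ?_
      simp only [hM, Matrix.of_apply]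
      have h0 : (-1 : ℤ) + (i:ℤ) - (i:ℤ) + 1 = 0 := by ring
      rw [h0, hF0]
    · intro i j hij
      simp only [hM, Matrix.of_apply]
      have h1 : (j:ℕ) < (i:ℕ) := hij
      have h2 := i.isLt
      exact hFneg _ (by omega) (by omega)
  have hall : ∀ m : ℕ, |(M (-1 + (m:ℤ))).det| = 1 := by
    intro m
    induction m with
    | zero => simp [hbase]
    | succ m ih =>
      have h1 := habs (-1 + ((m:ℕ)+1 : ℤ))
      have h2 : (-1 + ((m:ℕ)+1 : ℤ)) - 1 = -1 + (m:ℤ) := by ring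
      rw [h2] at h1
      have h3 : ((m+1:ℕ):ℤ) = (m:ℤ) + 1 := by push_cast; ring
      rw [h3, h1, ih]
  obtain ⟨m, hm⟩ : ∃ m : ℕ, r = -1 + (m:ℤ) := ⟨(r+1).toNat, by omega⟩
  have hdet : |(M r).det| = 1 := by rw [hm]; exact hall m
  refine ⟨hdet, ?_⟩
  have hne : ((M r).det : ℚ) ≠ 0 := by
    rcases (abs_eq (by norm_num : (0:ℤ) ≤ 1)).1 hdet with h | h <;> rw [h] <;> norm_num
  have hunit : IsUnit ((M r).map (Int.cast : ℤ → ℚ)) := by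
    apply (Matrix.isUnit_iff_isUnit_det _).2
    rw [show ((M r).map (Int.cast : ℤ → ℚ)) = (Int.castRingHom ℚ).mapMatrix (M r) from rfl,
      ← RingHom.map_det]
    exact isUnit_iff_ne_zero.2 hne
  exact Matrix.linearIndependent_rows_iff_isUnit.2 hunit
end
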